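/- Fix x, x' ∈ ℝ^d, v' ∈ ℝ^d, y_1, …, y_n ∈ ℝ^d, λ ∈ ℝ and 1 ≤ b ≤ n. Then the ZeroSARAH gradient estimator satisfies E_I[v(I) − ∇f(x)] = (1 − λ)(v' − ∇f(x')), where E_I is the expectation over a uniformly random size-b minibatch. -/

import Mathlib

/-!
Every index lies in exactly `C(n-1, b-1)` of the `C(n, b)` minibatches of size `b`, a fraction
`b / n` of them, so the mean over a uniformly random minibatch is an unbiased estimate of the
full mean. The ZeroSARAH estimator is affine in such minibatch means, so its expectation is
`∇f(x) - ∇f(x') + (1 - λ)v' + λ(∇f(x') - ȳ + ȳ)`, where `ȳ` is the mean of the `yᵢ`.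
-/

noncomputable section

/-- The average function `f = (1/n) ∑ᵢ fᵢ`. -/
noncomputable def avgF {d n : ℕ} (f : Fin n → EuclideanSpace ℝ (Fin d) → ℝ) :
    EuclideanSpace ℝ (Fin d) → ℝ :=
  fun z => (n : ℝ)⁻¹ * ∑ i, f i z

/-- Expectation (average) of a vector-valued function of a uniformly random
size-`b` subset of `{1,…,n}`. -/
noncomputable def expSubV {d : ℕ} (n b : ℕ)
    (g : Finset (Fin n) → EuclideanSpace ℝ (Fin d)) : EuclideanSpace ℝ (Fin d) :=
  (((Finset.powersetCard b (Finset.univ : Finset (Fin n))).card : ℝ))⁻¹ •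
    ∑ I ∈ Finset.powersetCard b (Finset.univ : Finset (Fin n)), g I

/-- The ZeroSARAH gradient estimator. -/
noncomputable def zsEst {d n : ℕ} (f : Fin n → EuclideanSpace ℝ (Fin d) → ℝ)
    (x x' v' : EuclideanSpace ℝ (Fin d)) (y : Fin n → EuclideanSpace ℝ (Fin d))
    (lam : ℝ) (b : ℕ) (I : Finset (Fin n)) : EuclideanSpace ℝ (Fin d) :=
  (b : ℝ)⁻¹ • ∑ i ∈ I, (gradient (f i) x - gradient (f i) x')
    + (1 - lam) • v'
    + lam • ((b : ℝ)⁻¹ • ∑ i ∈ I, (gradient (f i) x' - y i)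
        + (n : ℝ)⁻¹ • ∑ j, y j)

namespace Finset

variable {α M : Type*} [DecidableEq α]

theorem sum_powersetCard_sum [AddCommMonoid M] (s : Finset α) {b : ℕ} (hb : 1 ≤ b)
    (g : α → M) :
    ∑ I ∈ s.powersetCard b, ∑ i ∈ I, g i = (#s - 1).choose (b - 1) • ∑ i ∈ s, g i := by
  rw [sum_comm' (t' := s) (s' := fun i => (s.powersetCard b).filter (i ∈ ·))]
  · rw [smul_sum]
    refine sum_congr rfl fun i hi => ?_
    have hcount : #((s.powersetCard b).filter (i ∈ ·)) = (#s - 1).choose (b - 1) := by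
      simpa using card_filter_powersetCard_subset {i} s b (singleton_subset_iff.2 hi) hb
    rw [sum_const, hcount]
  · intro I i
    simp only [mem_filter, mem_powersetCard]
    exact ⟨fun ⟨hI, hi⟩ => ⟨⟨hI, hi⟩, hI.1 hi⟩, fun ⟨hI, _⟩ => ⟨hI.1, hI.2⟩⟩

theorem inv_smul_inv_choose_smul_sum_powersetCard_sum {K : Type*} [Field K] [CharZero K]
    [AddCommGroup M] [Module K M] (s : Finset α) {b : ℕ} (hb : 1 ≤ b) (hbs : b ≤ #s)
    (g : α → M) :
    (b : K)⁻¹ • ((#s).choose b : K)⁻¹ • ∑ I ∈ s.powersetCard b, ∑ i ∈ I, g i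
      = (#s : K)⁻¹ • ∑ i ∈ s, g i := by
  rw [sum_powersetCard_sum s hb, ← Nat.cast_smul_eq_nsmul K, smul_smul, smul_smul]
  congr 1
  obtain ⟨m, hm⟩ : ∃ m, #s = m + 1 := ⟨#s - 1, by omega⟩
  obtain ⟨k, rfl⟩ : ∃ k, b = k + 1 := ⟨b - 1, by omega⟩
  have hchoose : ((m + 1 : ℕ) : K) * m.choose k = (m + 1).choose (k + 1) * (k + 1 : ℕ) := by
    exact_mod_cast Nat.add_one_mul_choose_eq m k
  have hpos : ((m + 1).choose (k + 1) : K) ≠ 0 := by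
    exact_mod_cast (Nat.choose_pos (by omega)).ne'
  rw [hm, Nat.add_sub_cancel, Nat.add_sub_cancel]
  field_simp
  push_cast at hchoose ⊢
  linear_combination hchoose

end Finset

section Gradient

variable {𝕜 F ι : Type*} [RCLike 𝕜] [NormedAddCommGroup F] [InnerProductSpace 𝕜 F]
  [CompleteSpace F] {x : F}

theorem HasGradientAt.fun_sum {f : ι → F → 𝕜} {f' : ι → F} {s : Finset ι}
    (h : ∀ i ∈ s, HasGradientAt (f i) (f' i) x) :
    HasGradientAt (fun z => ∑ i ∈ s, f i z) (∑ i ∈ s, f' i) x := by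
  rw [hasGradientAt_iff_hasFDerivAt, map_sum]
  exact HasFDerivAt.fun_sum fun i hi => (h i hi).hasFDerivAt

theorem HasGradientAt.const_mul {f : F → 𝕜} {f' : F} (h : HasGradientAt f f' x) (c : 𝕜) :
    HasGradientAt (fun z => c * f z) ((starRingEnd 𝕜) c • f') x := by
  rw [hasGradientAt_iff_hasFDerivAt, map_smulₛₗ, RCLike.conj_conj]
  exact h.hasFDerivAt.const_mul c

end Gradient

theorem gradient_avgF {d n : ℕ} {f : Fin n → EuclideanSpace ℝ (Fin d) → ℝ}
    (hdiff : ∀ i, Differentiable ℝ (f i)) (z : EuclideanSpace ℝ (Fin d)) :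
    gradient (avgF f) z = (n : ℝ)⁻¹ • ∑ i, gradient (f i) z := by
  have hsum := HasGradientAt.fun_sum fun i (_ : i ∈ Finset.univ) => (hdiff i z).hasGradientAt
  unfold avgF
  simpa only [RCLike.conj_to_real] using (hsum.const_mul (n : ℝ)⁻¹).gradient

section ExpSubV

variable {d n b : ℕ} {g h : Finset (Fin n) → EuclideanSpace ℝ (Fin d)}

theorem expSubV_add : expSubV n b (fun I => g I + h I) = expSubV n b g + expSubV n b h := by
  simp only [expSubV, Finset.sum_add_distrib, smul_add]

theorem expSubV_sub : expSubV n b (fun I => g I - h I) = expSubV n b g - expSubV n b h := by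
  simp only [expSubV, Finset.sum_sub_distrib, smul_sub]

theorem expSubV_smul (c : ℝ) : expSubV n b (fun I => c • g I) = c • expSubV n b g := by
  simp only [expSubV, ← Finset.smul_sum, smul_comm c]

theorem expSubV_const (hbn : b ≤ n) (v : EuclideanSpace ℝ (Fin d)) :
    expSubV n b (fun _ => v) = v := by
  have hpos : (0 : ℝ) < (n.choose b : ℕ) := by exact_mod_cast Nat.choose_pos hbn
  simp only [expSubV, Finset.sum_const, ← Nat.cast_smul_eq_nsmul ℝ, Finset.card_powersetCard,
    Finset.card_univ, Fintype.card_fin]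
  exact inv_smul_smul₀ hpos.ne' v

theorem inv_smul_expSubV_sum (hb : 1 ≤ b) (hbn : b ≤ n) (a : Fin n → EuclideanSpace ℝ (Fin d)) :
    (b : ℝ)⁻¹ • expSubV n b (fun I => ∑ i ∈ I, a i) = (n : ℝ)⁻¹ • ∑ i, a i := by
  have := Finset.inv_smul_inv_choose_smul_sum_powersetCard_sum (K := ℝ) Finset.univ hb
    (by simpa using hbn) a
  simpa only [expSubV, Finset.card_powersetCard, Finset.card_univ, Fintype.card_fin] using this

end ExpSubV

theorem zerosarah_estimator_mean_general {d n : ℕ}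
    (f : Fin n → EuclideanSpace ℝ (Fin d) → ℝ)
    (hdiff : ∀ i, Differentiable ℝ (f i))
    (x x' v' : EuclideanSpace ℝ (Fin d)) (y : Fin n → EuclideanSpace ℝ (Fin d))
    (lam : ℝ) (b : ℕ) (hb1 : 1 ≤ b) (hbn : b ≤ n) :
    expSubV n b (fun I => zsEst f x x' v' y lam b I - gradient (avgF f) x)
      = (1 - lam) • (v' - gradient (avgF f) x') := by
  simp only [zsEst, expSubV_sub, expSubV_add, expSubV_smul, expSubV_const hbn,
    inv_smul_expSubV_sum hb1 hbn, gradient_avgF hdiff]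
  simp only [Finset.sum_sub_distrib]
  module

/-- Conditional-mean identity for the ZeroSARAH estimator:
`E_I[v(I) − ∇f(x)] = (1 − λ)(v' − ∇f(x'))`. -/
theorem zerosarah_estimator_mean {d n : ℕ} (hd : 1 ≤ d) (hn : 1 ≤ n)
    (f : Fin n → EuclideanSpace ℝ (Fin d) → ℝ)
    (hdiff : ∀ i, Differentiable ℝ (f i))
    (x x' v' : EuclideanSpace ℝ (Fin d)) (y : Fin n → EuclideanSpace ℝ (Fin d))
    (lam : ℝ) (b : ℕ) (hb1 : 1 ≤ b) (hbn : b ≤ n) :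
    expSubV n b (fun I => zsEst f x x' v' y lam b I - gradient (avgF f) x)
      = (1 - lam) • (v' - gradient (avgF f) x') :=
  zerosarah_estimator_mean_general f hdiff x x' v' y lam b hb1 hbn
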